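/- arXiv:2403.10526 — 2 statements merged into one kernel-verified Lean document; each statement's English description precedes it below -/
import Mathlib

section
/- Let A be a von Neumann algebra on H and P, Q projections in A. Then I−P is invertible up to the pair (Q, P) in A if and only if H is the (not necessarily orthogonal) direct sum of (I−Q)(H) and P(H), i.e., (I−Q)(H) ∩ P(H) = {0} and (I−Q)(H) + P(H) = H. -/
/-!
An inverse `b` of the compression `(1 - P)(1 - Q)` splits every `x` as
`(1 - Q) b x + (x - (1 - Q) b x)` with the second summand in `P(H)`, and it kills
`(1 - Q)(H) ∩ P(H)`, on which `(1 - P)(1 - Q)` vanishes. Conversely, the two ranges are closed, so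
the projection `E` onto `(1 - Q)(H)` along `P(H)` is bounded; it commutes with every operator
commuting with `P` and `Q`, hence lies in `A` by the double commutant theorem, and it inverts the
compression.
-/

variable {H : Type*} [NormedAddCommGroup H] [InnerProductSpace ℂ H] [CompleteSpace H]

/-- `p` is a projection: self-adjoint idempotent. -/
def IsProjE {R : Type*} [Ring R] [StarRing R] (p : R) : Prop := p * p = p ∧ star p = p

/-- `a` is invertible up to the pair of projections `(p, q)`, with witness in `S`. -/
def InvUpToIn {R : Type*} [Ring R] [StarRing R] (S : Set R) (a p q : R) : Prop :=
  ∃ b ∈ S, b = (1 - p) * b * (1 - q) ∧ (1 - q) * a * (1 - p) * b = 1 - q ∧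
    b * ((1 - q) * a * (1 - p)) = 1 - p

namespace ContinuousLinearMap

variable {R M : Type*} [Ring R] [TopologicalSpace M] [AddCommGroup M] [Module R M]
  [IsTopologicalAddGroup M] {e f b : M →L[R] M}

theorem disjoint_range_of_mul_one_sub_mul_eq (he : IsIdempotentElem e) (hf : IsIdempotentElem f)
    (h : b * ((1 - f) * e) = e) : Disjoint e.range f.range := by
  rw [Submodule.disjoint_def]
  intro x hxe hxf
  rw [LinearMap.IsIdempotentElem.mem_range_iff (IsIdempotentElem.toLinearMap he), coe_coe] at hxe
  rw [LinearMap.IsIdempotentElem.mem_range_iff (IsIdempotentElem.toLinearMap hf), coe_coe] at hxf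
  calc x = (b * ((1 - f) * e)) x := by rw [h, hxe]
    _ = 0 := by simp [hxe, hxf]

theorem codisjoint_range_of_one_sub_mul_mul_eq (hf : IsIdempotentElem f)
    (h : (1 - f) * e * b = 1 - f) : Codisjoint e.range f.range := by
  rw [codisjoint_iff, eq_top_iff]
  intro x _
  have hker : x - e (b x) ∈ f.range := by
    rw [LinearMap.IsIdempotentElem.range_eq_ker_one_sub (IsIdempotentElem.toLinearMap hf),
      LinearMap.mem_ker]
    have hx := congr($h x)
    simp only [mul_apply_eq_comp, sub_apply, one_apply_eq_self] at hx
    simp only [LinearMap.sub_apply, Module.End.one_apply, coe_coe, map_sub, ← hx]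
    abel
  simpa using Submodule.add_mem_sup (LinearMap.mem_range_self (e : M →ₗ[R] M) (b x)) hker

end ContinuousLinearMap

namespace Submodule

variable {R M : Type*} [Ring R] [TopologicalSpace M] [AddCommGroup M] [Module R M]
  {p q : Submodule R M} {e : M →L[R] M}

theorem mul_projectionL_of_range_eq (he : IsIdempotentElem e) (h : IsTopCompl p q)
    (hep : e.range = p) : e * p.projectionL q h = p.projectionL q h := by
  ext x
  have hx : p.projectionL q h x ∈ e.range := hep ▸ projectionL_apply_mem h x
  rwa [LinearMap.IsIdempotentElem.mem_range_iff
    (ContinuousLinearMap.IsIdempotentElem.toLinearMap he)] at hx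

theorem projectionL_mul_of_range_eq (h : IsTopCompl p q) (hep : e.range = p) :
    p.projectionL q h * e = e := by
  ext x
  exact projectionL_apply_left h ⟨e x, hep ▸ LinearMap.mem_range_self _ x⟩

end Submodule

theorem VonNeumannAlgebra.projectionL_mem (A : VonNeumannAlgebra H) {e f : H →L[ℂ] H}
    (he : IsIdempotentElem e) (heA : e ∈ A) (hf : IsIdempotentElem f) (hfA : f ∈ A)
    (h : e.range.IsTopCompl f.range) : e.range.projectionL f.range h ∈ A := by
  rw [← SetLike.mem_coe, ← A.centralizer_centralizer, Set.mem_centralizer_iff]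
  intro T hT
  have hinvt {g : H →L[ℂ] H} (hg : IsIdempotentElem g) (hgA : g ∈ A) :
      g.range ∈ Module.End.invtSubmodule (T : H →ₗ[ℂ] H) :=
    (ContinuousLinearMap.IsIdempotentElem.commute_iff hg).mp (hT g hgA) |>.1
  have hcomm := ContinuousLinearMap.IsIdempotentElem.commute_iff (T := T)
    (Submodule.isIdempotentElem_projectionL h)
  rw [Submodule.range_projectionL, Submodule.ker_projectionL] at hcomm
  exact (hcomm.mpr ⟨hinvt he heA, hinvt hf hfA⟩).eq.symm

/-- `E` and `F = 1 - E` stand for the projections onto the range of `1 - p` along the range of `q`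
and back; for idempotents, `x * y = y ∧ y * x = x` says that `x` and `y` have the same range. -/
theorem invUpToIn_one_sub_of_projection {R : Type*} [Ring R] [StarRing R] {S : Set R}
    {p q E F : R} (hq : IsIdempotentElem q) (hES : E ∈ S) (hEF : E + F = 1)
    (hE₁ : (1 - p) * E = E) (hE₂ : E * (1 - p) = 1 - p)
    (hF₁ : q * F = F) (hF₂ : F * q = q) :
    InvUpToIn S (1 - q) p q := by
  obtain rfl : F = 1 - E := eq_sub_of_add_eq' hEF
  have hEq : E * q = 0 := by rwa [sub_mul, one_mul, sub_eq_self] at hF₂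
  have hqE : (1 - q) * E = 1 - q := by
    have h : (1 - q) * (1 - E) = 0 := by rw [sub_mul, one_mul, hF₁, sub_self]
    calc (1 - q) * E = (1 - q) - (1 - q) * (1 - E) := by noncomm_ring
      _ = 1 - q := by rw [h, sub_zero]
  refine ⟨E, hES, ?_, ?_, ?_⟩
  · rw [hE₁, mul_one_sub, hEq, sub_zero]
  · rw [hq.one_sub.eq, mul_assoc, hE₁, hqE]
  · rw [hq.one_sub.eq, ← mul_assoc, mul_one_sub E q, hEq, sub_zero, hE₂]

/-- `I - P` is invertible up to `(Q, P)` iff `H = (I-Q)(H) ∔ P(H)`. -/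
theorem one_sub_proj_invUpTo_iff_direct_sum (A : VonNeumannAlgebra H)
    (P Q : H →L[ℂ] H) (hP : IsProjE P) (hPA : P ∈ A) (hQ : IsProjE Q) (hQA : Q ∈ A) :
    InvUpToIn (A : Set (H →L[ℂ] H)) (1 - P) Q P ↔
      (LinearMap.range ((1 - Q : H →L[ℂ] H) : H →ₗ[ℂ] H) ⊓ LinearMap.range (P : H →ₗ[ℂ] H) = ⊥ ∧
        LinearMap.range ((1 - Q : H →L[ℂ] H) : H →ₗ[ℂ] H) ⊔ LinearMap.range (P : H →ₗ[ℂ] H) = ⊤) := by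
  have hP' : IsIdempotentElem P := hP.1
  have hQ' : IsIdempotentElem (1 - Q) := IsIdempotentElem.one_sub hQ.1
  rw [← disjoint_iff, ← codisjoint_iff, ← isCompl_iff]
  constructor
  · rintro ⟨b, -, -, hb₁, hb₂⟩
    rw [hP'.one_sub.eq] at hb₁ hb₂
    exact ⟨ContinuousLinearMap.disjoint_range_of_mul_one_sub_mul_eq hQ' hP' hb₂,
      ContinuousLinearMap.codisjoint_range_of_one_sub_mul_mul_eq hP' hb₁⟩
  · intro hcompl
    have h := Submodule.IsCompl.isTopCompl_of_isClosed hcompl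
      (ContinuousLinearMap.IsIdempotentElem.isClosed_range hQ')
      (ContinuousLinearMap.IsIdempotentElem.isClosed_range hP')
    exact invUpToIn_one_sub_of_projection hP'
      (A.projectionL_mem hQ' (sub_mem (one_mem A) hQA) hP' hPA h)
      (Submodule.projectionL_add_projectionL_eq_id h)
      (Submodule.mul_projectionL_of_range_eq hQ' h rfl)
      (Submodule.projectionL_mul_of_range_eq h rfl)
      (Submodule.mul_projectionL_of_range_eq hP' h.symm rfl)
      (Submodule.projectionL_mul_of_range_eq h.symm rfl)
end

section
/- Let A be a properly infinite von Neumann algebra on H and T ∈ A an A-Fredholm operator, invertible up to (I−P̃, I−Q̃) where I−P̃ and I−Q̃ are finite projections in A and (I−Q̃)T P̃ = 0. Then T maps P̃(H) isomorphically (bounded bijection) onto Q̃(H); in particular T(P̃(H)) is closed. -/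
variable {H : Type*} [NormedAddCommGroup H] [InnerProductSpace ℂ H] [CompleteSpace H]

/-- Murray–von Neumann equivalence of `p` and `q`, witnessed inside the set `S`. -/
def MvN {R : Type*} [Ring R] [StarRing R] (S : Set R) (p q : R) : Prop :=
  ∃ v ∈ S, v * star v = p ∧ star v * v = q

/-- `p` is a finite projection in `S`. -/
def FiniteProjIn {R : Type*} [Ring R] [StarRing R] (S : Set R) (p : R) : Prop :=
  p ∈ S ∧ IsProjE p ∧
    ∀ q : R, q ∈ S → IsProjE q → q * p = q → p * q = q → MvN S p q → q = p

/-! With `P = Pt` and `Q = Qt`, the witness `S` of invertibility up to `(1 - P, 1 - Q)` satisfies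
`S = P S Q`, `(Q T P) S = Q` and `S (Q T P) = P`, while `(1 - Q) T P = 0` says `Q T P = T P`.
So `S` is a two-sided inverse of `T` between `range P` and `range Q`, and `range Q` is closed
as the range of an idempotent. -/

theorem one_sub_mul_mul_eq_zero_iff {R : Type*} [Ring R] {q a p : R} :
    (1 - q) * a * p = 0 ↔ q * a * p = a * p := by
  rw [sub_mul, sub_mul, one_mul, sub_eq_zero, eq_comm]

theorem InvUpToIn.exists_corner_inverse {R : Type*} [Ring R] [StarRing R] {S : Set R} {a p q : R}
    (h : InvUpToIn S a (1 - p) (1 - q)) (hp : IsIdempotentElem p) (hqap : q * a * p = a * p) :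
    ∃ b ∈ S, p * b = b ∧ b * (a * p) = p ∧ a * p * b = q := by
  obtain ⟨b, hbS, hb, hqapb, hbqap⟩ := h
  simp only [sub_sub_cancel, hqap] at hb hqapb hbqap
  refine ⟨b, hbS, ?_, hbqap, hqapb⟩
  rw [hb, ← mul_assoc, ← mul_assoc, hp.eq]

namespace ContinuousLinearMap

variable {R M : Type*} [Semiring R] [TopologicalSpace M] [AddCommMonoid M] [Module R M]

theorem bijOn_range_of_mul_eq {p q a b : M →L[R] M} (hp : IsIdempotentElem p)
    (hq : IsIdempotentElem q) (hqap : q * a * p = a * p) (hpb : p * b = b)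
    (hbap : b * (a * p) = p) (hapb : a * p * b = q) :
    Set.BijOn a (LinearMap.range (p : M →ₗ[R] M)) (LinearMap.range (q : M →ₗ[R] M)) := by
  have fixedPoints_eq {f : M →L[R] M} (hf : IsIdempotentElem f) :
      (LinearMap.range (f : M →ₗ[R] M) : Set M) = {x | f x = x} :=
    Set.ext fun _ ↦ LinearMap.IsIdempotentElem.mem_range_iff (IsIdempotentElem.toLinearMap hf)
  rw [fixedPoints_eq hp, fixedPoints_eq hq]
  have hpb_apply (y : M) : p (b y) = b y := congr($hpb y)
  refine Set.InvOn.bijOn (f' := b) ⟨fun x hx ↦ ?_, fun y hy ↦ ?_⟩ (fun x hx ↦ ?_) fun y _ ↦ ?_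
  · simpa [hx.out] using congr($hbap x)
  · simpa [hpb_apply, hy.out] using congr($hapb y)
  · simpa [hx.out] using congr($hqap x)
  · exact hpb_apply y

end ContinuousLinearMap

theorem fredholm_maps_isomorphically_general (A : VonNeumannAlgebra H)
    (T Pt Qt : H →L[ℂ] H)
    (hPt : IsProjE Pt) (hQt : IsProjE Qt)
    (hInv : InvUpToIn (A : Set (H →L[ℂ] H)) T (1 - Pt) (1 - Qt))
    (hTri : (1 - Qt) * T * Pt = 0) :
    Set.InjOn T ((LinearMap.range (Pt : H →ₗ[ℂ] H) : Submodule ℂ H) : Set H) ∧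
    T '' ((LinearMap.range (Pt : H →ₗ[ℂ] H) : Submodule ℂ H) : Set H) =
      ((LinearMap.range (Qt : H →ₗ[ℂ] H) : Submodule ℂ H) : Set H) ∧
    IsClosed (T '' ((LinearMap.range (Pt : H →ₗ[ℂ] H) : Submodule ℂ H) : Set H)) := by
  have hQTP : Qt * T * Pt = T * Pt := one_sub_mul_mul_eq_zero_iff.mp hTri
  obtain ⟨S, -, hPS, hSTP, hTPS⟩ := hInv.exists_corner_inverse hPt.1 hQTP
  have hbij := ContinuousLinearMap.bijOn_range_of_mul_eq hPt.1 hQt.1 hQTP hPS hSTP hTPS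
  exact ⟨hbij.injOn, hbij.image_eq,
    hbij.image_eq ▸ ContinuousLinearMap.IsIdempotentElem.isClosed_range hQt.1⟩

theorem fredholm_maps_isomorphically (A : VonNeumannAlgebra H)
    -- `A` is properly infinite: the identity is not a finite projection
    (hinf : ¬ FiniteProjIn (A : Set (H →L[ℂ] H)) 1)
    (T Pt Qt : H →L[ℂ] H) (hT : T ∈ A)
    (hPt : IsProjE Pt) (hPtA : Pt ∈ A) (hQt : IsProjE Qt) (hQtA : Qt ∈ A)
    (hPfin : FiniteProjIn (A : Set (H →L[ℂ] H)) (1 - Pt))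
    (hQfin : FiniteProjIn (A : Set (H →L[ℂ] H)) (1 - Qt))
    (hInv : InvUpToIn (A : Set (H →L[ℂ] H)) T (1 - Pt) (1 - Qt))
    (hTri : (1 - Qt) * T * Pt = 0) :
    Set.InjOn T ((LinearMap.range (Pt : H →ₗ[ℂ] H) : Submodule ℂ H) : Set H) ∧
    T '' ((LinearMap.range (Pt : H →ₗ[ℂ] H) : Submodule ℂ H) : Set H) =
      ((LinearMap.range (Qt : H →ₗ[ℂ] H) : Submodule ℂ H) : Set H) ∧
    IsClosed (T '' ((LinearMap.range (Pt : H →ₗ[ℂ] H) : Submodule ℂ H) : Set H)) :=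
  fredholm_maps_isomorphically_general A T Pt Qt hPt hQt hInv hTri
end
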